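/- arXiv:1805.03613 — 9 statements merged into one kernel-verified Lean document; each statement's English description precedes it below -/
import Mathlib

section
/- For all integers N_R ≥ 1 and N_T ≥ 1 and every real μ_R with 0 < μ_R ≤ 1, the identity ∑_{m=0}^{N_R-1} C(N_R-1, m) · ((N_T + (N_R-m-1)/(m+1)) / N_T) · μ_R^m · (1-μ_R)^{N_R-m} = ((N_T-1)/N_T) · (1-μ_R) + ((1-μ_R)/(N_T μ_R)) · (1 - (1-μ_R)^{N_R}) holds, where C(a,b) denotes the binomial coefficient. -/
/-!
Factor out `1 / N_T` and use `C(n, m) (n - m) / (m + 1) = C(n + 1, m + 1) - C(n, m)` (with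
`n = N_R - 1`) to split each weight as `(N_T - 1) C(n, m) + C(n + 1, m + 1)`. The two resulting
sums are binomial expansions of `(μ_R + (1 - μ_R))^n` and, after multiplying by `μ_R`, of
`(μ_R + (1 - μ_R))^(n+1)` with its `m = 0` term removed.
-/

open Finset

theorem add_pow_sub_pow_eq_sum {R : Type*} [CommRing R] (x y : R) (n : ℕ) :
    (x + y) ^ n - y ^ n = ∑ m ∈ range n, x ^ (m + 1) * y ^ (n - (m + 1)) * n.choose (m + 1) := by
  rw [add_pow, sum_range_succ']
  simp

theorem choose_mul_add_sub_div_succ {K : Type*} [Field K] [CharZero K] (n m : ℕ) (t : K) :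
    (n.choose m : K) * (t + ((n : K) - m) / (m + 1))
      = (t - 1) * n.choose m + (n + 1).choose (m + 1) := by
  have h : ((n : K) + 1) * n.choose m = (n + 1).choose (m + 1) * ((m : K) + 1) := by
    exact_mod_cast Nat.add_one_mul_choose_eq n m
  field_simp
  linear_combination h

theorem sum_range_choose_mul_add_sub_div_succ_mul_pow_mul_pow {K : Type*} [Field K] [CharZero K]
    (t x y : K) (hx : x ≠ 0) (n : ℕ) :
    ∑ m ∈ range (n + 1), (n.choose m : K) * (t + ((n : K) - m) / (m + 1)) * x ^ m * y ^ (n + 1 - m)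
      = (t - 1) * y * (x + y) ^ n + y / x * ((x + y) ^ (n + 1) - y ^ (n + 1)) := by
  rw [add_pow, add_pow_sub_pow_eq_sum, mul_sum, mul_sum, ← sum_add_distrib]
  refine sum_congr rfl fun m hm => ?_
  have hmn : n + 1 - m = n - m + 1 := by have := mem_range.mp hm; omega
  rw [choose_mul_add_sub_div_succ, hmn, Nat.add_sub_add_right]
  field_simp
  ring

theorem access_load_closed_form_general (N_R N_T : ℕ) (hNR : 1 ≤ N_R)
    (μR : ℝ) (hμ0 : 0 < μR) :
    ∑ m ∈ Finset.range N_R,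
        ((N_R - 1).choose m : ℝ) *
          (((N_T : ℝ) + ((N_R : ℝ) - m - 1) / (m + 1)) / N_T) *
          μR ^ m * (1 - μR) ^ (N_R - m)
      = (((N_T : ℝ) - 1) / N_T) * (1 - μR)
        + ((1 - μR) / (N_T * μR)) * (1 - (1 - μR) ^ N_R) := by
  obtain ⟨n, rfl⟩ : ∃ n, N_R = n + 1 := ⟨N_R - 1, by omega⟩
  have hcleared := sum_range_choose_mul_add_sub_div_succ_mul_pow_mul_pow (N_T : ℝ) μR (1 - μR)
    hμ0.ne' n
  rw [add_sub_cancel, one_pow, one_pow] at hcleared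
  calc _ = (∑ m ∈ range (n + 1), (n.choose m : ℝ) * (N_T + ((n : ℝ) - m) / (m + 1))
            * μR ^ m * (1 - μR) ^ (n + 1 - m)) / N_T := by
        rw [sum_div]
        refine sum_congr rfl fun m _ => ?_
        push_cast
        ring
    _ = _ := by
        rw [hcleared]
        ring

theorem access_load_closed_form (N_R N_T : ℕ) (hNR : 1 ≤ N_R) (hNT : 1 ≤ N_T)
    (μR : ℝ) (hμ0 : 0 < μR) (hμ1 : μR ≤ 1) :
    ∑ m ∈ Finset.range N_R,
        ((N_R - 1).choose m : ℝ) *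
          (((N_T : ℝ) + ((N_R : ℝ) - m - 1) / (m + 1)) / N_T) *
          μR ^ m * (1 - μR) ^ (N_R - m)
      = (((N_T : ℝ) - 1) / N_T) * (1 - μR)
        + ((1 - μR) / (N_T * μR)) * (1 - (1 - μR) ^ N_R) :=
  access_load_closed_form_general N_R N_T hNR μR hμ0
end

section
/- For every integer N_R ≥ 1 and every real μ_R with 0 < μ_R ≤ 1, ((1-μ_R)/μ_R) · (1 - (1-μ_R)^{N_R}) ≤ 12 · max_{l ∈ {1,...,N_R}} l · (1-μ_R)^l. -/
/-! With `q = 1 - μ`, Bernoulli's inequality `1 - q ^ n ≤ n μ` bounds the load by both `N` and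
`1 / μ`, and also shows `q ^ m ≥ 1 / 2` once `m μ ≤ 1 / 2`. For `μ ≤ 1 / 2` the term
`l = min N ⌊1 / (2μ)⌋` of the maximum is therefore at least `l / 2`, while the load is at most
`4 l`. For `μ > 1 / 2` the term `l = 1` alone suffices, the load being at most `q / μ < 2 q`. -/

section OrderedField

variable {K : Type*} [Field K] [LinearOrder K] [IsStrictOrderedRing K] {μ : K}

lemma one_sub_one_sub_pow_le (hμ : μ ≤ 2) (n : ℕ) : 1 - (1 - μ) ^ n ≤ n * μ := by
  have := one_add_mul_sub_le_pow (a := 1 - μ) (by linarith) n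
  linarith

lemma half_le_one_sub_pow (hμ : μ ≤ 2) {n : ℕ} (h : n * μ ≤ 1 / 2) : 1 / 2 ≤ (1 - μ) ^ n := by
  linarith [one_sub_one_sub_pow_le hμ n]

section Load

variable (hμ0 : 0 < μ) (hμ1 : μ ≤ 1)
include hμ0 hμ1

lemma div_mul_one_sub_pow_le_div (n : ℕ) :
    (1 - μ) / μ * (1 - (1 - μ) ^ n) ≤ (1 - μ) / μ :=
  mul_le_of_le_one_right (div_nonneg (by linarith) hμ0.le)
    (sub_le_self _ (pow_nonneg (by linarith) n))

lemma div_mul_one_sub_pow_le_mul (n : ℕ) :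
    (1 - μ) / μ * (1 - (1 - μ) ^ n) ≤ (1 - μ) * n := by
  calc (1 - μ) / μ * (1 - (1 - μ) ^ n)
      ≤ (1 - μ) / μ * (n * μ) :=
        mul_le_mul_of_nonneg_left (one_sub_one_sub_pow_le (by linarith) n)
          (div_nonneg (by linarith) hμ0.le)
    _ = (1 - μ) * n := by field_simp

lemma div_mul_one_sub_pow_le_two_mul (hμ : 1 / 2 < μ) (n : ℕ) :
    (1 - μ) / μ * (1 - (1 - μ) ^ n) ≤ 2 * (1 - μ) := by
  have : (1 - μ) / μ ≤ 2 * (1 - μ) := by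
    rw [div_le_iff₀ hμ0]; nlinarith
  linarith [div_mul_one_sub_pow_le_div hμ0 hμ1 n]

lemma div_mul_one_sub_pow_le_four_mul_min {k : ℕ} (hk : 1 / μ < 4 * k) (n : ℕ) :
    (1 - μ) / μ * (1 - (1 - μ) ^ n) ≤ 4 * (min n k : ℕ) := by
  rcases min_choice n k with h | h <;> rw [h]
  · have : (1 - μ) * n ≤ 4 * n := by nlinarith [(Nat.cast_nonneg n : (0 : K) ≤ n)]
    linarith [div_mul_one_sub_pow_le_mul hμ0 hμ1 n]
  · have : (1 - μ) / μ ≤ 1 / μ := by gcongr; linarith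
    linarith [div_mul_one_sub_pow_le_div hμ0 hμ1 n]

end Load

lemma exists_nat_mul_le_half_and_inv_lt_four_mul [FloorSemiring K] (hμ0 : 0 < μ)
    (hμ : μ ≤ 1 / 2) : ∃ k : ℕ, 1 ≤ k ∧ k * μ ≤ 1 / 2 ∧ 1 / μ < 4 * k := by
  have h_one : 1 ≤ 1 / (2 * μ) := by rw [le_div_iff₀ (by positivity)]; linarith
  refine ⟨⌊1 / (2 * μ)⌋₊, Nat.one_le_floor_iff _ |>.mpr h_one, ?_, ?_⟩
  · have := Nat.floor_le (a := 1 / (2 * μ)) (by positivity)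
    rw [le_div_iff₀ (by positivity)] at this
    linarith
  · have := Nat.div_two_lt_floor h_one
    have : 1 / μ = 4 * (1 / (2 * μ) / 2) := by field_simp; norm_num
    linarith

end OrderedField

theorem fronthaul_gap_le_twelve (N_R : ℕ) (hN : 1 ≤ N_R) (μR : ℝ)
    (hμ0 : 0 < μR) (hμ1 : μR ≤ 1) :
    ((1 - μR) / μR) * (1 - (1 - μR) ^ N_R)
      ≤ 12 * (Finset.Icc 1 N_R).sup' (Finset.nonempty_Icc.mpr hN)
          (fun l => (l : ℝ) * (1 - μR) ^ l) := by
  rcases le_or_gt μR (1 / 2) with hμ | hμ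
  · obtain ⟨k, hk1, hkμ, hk4⟩ := exists_nat_mul_le_half_and_inv_lt_four_mul hμ0 hμ
    set m := min N_R k
    have hm_mem : m ∈ Finset.Icc 1 N_R := Finset.mem_Icc.mpr ⟨le_min hN hk1, min_le_left _ _⟩
    have hm_le : (m : ℝ) * μR ≤ 1 / 2 :=
      le_trans (by gcongr; exact_mod_cast min_le_right _ _) hkμ
    have hqm := half_le_one_sub_pow (by linarith) hm_le
    have hS := Finset.le_sup' (fun l : ℕ => (l : ℝ) * (1 - μR) ^ l) hm_mem
    have hload := div_mul_one_sub_pow_le_four_mul_min hμ0 hμ1 hk4 N_R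
    nlinarith [(Nat.cast_nonneg m : (0 : ℝ) ≤ m)]
  · have hS := Finset.le_sup' (fun l : ℕ => (l : ℝ) * (1 - μR) ^ l)
      (Finset.mem_Icc.mpr ⟨le_rfl, hN⟩)
    simp only [Nat.cast_one, one_mul, pow_one] at hS
    linarith [div_mul_one_sub_pow_le_two_mul hμ0 hμ1 hμ N_R]
end

section
/- Let N_R ≥ 13 be an integer and μ_R a real with 1/N_R ≤ μ_R < 1/12. Then ((1-μ_R)/μ_R) · (1 - (1-μ_R)^{N_R}) < 8 · max_{l ∈ {1,...,N_R}} l · (1-μ_R)^l. -/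
/-!
Bounding `1 - (1 - μ) ^ N` by `1`, the left-hand side is at most `1 / μ - 1`. For
`l = ⌊1 / (4μ)⌋₊` we have `l μ ≤ 1 / 4`, so Bernoulli's inequality gives `(1 - μ) ^ l ≥ 3 / 4`,
whence `8 l (1 - μ) ^ l ≥ 6 l > 6 (1 / (4μ) - 1) = 3 / (2μ) - 6`, which exceeds `1 / μ - 1`
as soon as `μ ≤ 1 / 10`. The condition `1 / N ≤ μ` keeps `l` inside `{1, …, N}`.
-/

lemma div_mul_one_sub_one_sub_pow_le {μ : ℝ} (hμ₀ : 0 < μ) (hμ₁ : μ ≤ 1) (N : ℕ) :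
    ((1 - μ) / μ) * (1 - (1 - μ) ^ N) ≤ 1 / μ - 1 := by
  have hfrac : (1 - μ) / μ = 1 / μ - 1 := by field_simp
  rw [← hfrac]
  exact mul_le_of_le_one_right (div_nonneg (by linarith) hμ₀.le)
    (by linarith [pow_nonneg (by linarith : (0 : ℝ) ≤ 1 - μ) N])

lemma three_quarters_le_one_sub_pow_floor {μ : ℝ} (hμ₀ : 0 < μ) (hμ₁ : μ ≤ 2) :
    3 / 4 ≤ (1 - μ) ^ ⌊1 / (4 * μ)⌋₊ := by
  set l := ⌊1 / (4 * μ)⌋₊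
  have hlμ : (l : ℝ) * μ ≤ 1 / 4 := by
    have := Nat.floor_le (by positivity : (0 : ℝ) ≤ 1 / (4 * μ))
    rw [le_div_iff₀ (by positivity)] at this
    linarith
  have hbernoulli := one_add_mul_sub_le_pow (by linarith : (-1 : ℝ) ≤ 1 - μ) l
  linarith

lemma inv_sub_one_lt_eight_mul_floor_mul_pow {μ : ℝ} (hμ₀ : 0 < μ) (hμ : μ ≤ 1 / 10) :
    1 / μ - 1 < 8 * (⌊1 / (4 * μ)⌋₊ * (1 - μ) ^ ⌊1 / (4 * μ)⌋₊) := by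
  set l := ⌊1 / (4 * μ)⌋₊
  have hl : 1 / (4 * μ) < l + 1 := Nat.lt_floor_add_one _
  have hpow := three_quarters_le_one_sub_pow_floor hμ₀ (by linarith)
  have hinv : 10 ≤ 1 / μ := by rw [le_div_iff₀ hμ₀]; linarith
  have hquarter : 1 / (4 * μ) = 1 / 4 * (1 / μ) := by field_simp
  calc 1 / μ - 1 ≤ 6 * (1 / (4 * μ) - 1) := by rw [hquarter]; linarith
    _ < 6 * l := by linarith
    _ ≤ 8 * (l * (1 - μ) ^ l) := by nlinarith [Nat.cast_nonneg (α := ℝ) l]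

lemma floor_inv_four_mul_mem_Icc {N : ℕ} {μ : ℝ} (hN : 0 < N) (hμN : 1 / (N : ℝ) ≤ μ)
    (hμ : μ ≤ 1 / 4) : ⌊1 / (4 * μ)⌋₊ ∈ Finset.Icc 1 N := by
  have hμ₀ : 0 < μ := lt_of_lt_of_le (by positivity) hμN
  have hNμ : 1 ≤ N * μ := by rwa [div_le_iff₀ (by positivity), mul_comm] at hμN
  refine Finset.mem_Icc.mpr ⟨Nat.le_floor ?_, Nat.floor_le_of_le ?_⟩
  · rw [Nat.cast_one, le_div_iff₀ (by positivity)]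
    linarith
  · rw [div_le_iff₀ (by positivity)]
    nlinarith

theorem fronthaul_gap_mid_regime (N_R : ℕ) (hN : 13 ≤ N_R) (μR : ℝ)
    (hμlo : 1 / (N_R : ℝ) ≤ μR) (hμhi : μR < 1 / 12) :
    ((1 - μR) / μR) * (1 - (1 - μR) ^ N_R)
      < 8 * (Finset.Icc 1 N_R).sup'
          (Finset.nonempty_Icc.mpr (le_trans (by norm_num) hN))
          (fun l => (l : ℝ) * (1 - μR) ^ l) := by
  have hμ₀ : 0 < μR := lt_of_lt_of_le (by positivity) hμlo
  have hmem := floor_inv_four_mul_mem_Icc (by omega) hμlo (by linarith)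
  calc ((1 - μR) / μR) * (1 - (1 - μR) ^ N_R) ≤ 1 / μR - 1 :=
        div_mul_one_sub_one_sub_pow_le hμ₀ (by linarith) N_R
    _ < 8 * (⌊1 / (4 * μR)⌋₊ * (1 - μR) ^ ⌊1 / (4 * μR)⌋₊) :=
        inv_sub_one_lt_eight_mul_floor_mul_pow hμ₀ (by linarith)
    _ ≤ _ := by
        gcongr
        exact Finset.le_sup' (fun l : ℕ => (l : ℝ) * (1 - μR) ^ l) hmem
end

section
/- Let N_R ≥ 13 be an integer and μ_R a real with 0 < μ_R < 1/N_R. Then 1 - (1-μ_R)^{N_R} < 8 · μ_R · ⌊N_R/4⌋ · (1-μ_R)^{⌊N_R/4⌋ - 1}, where ⌊N_R/4⌋ denotes the integer floor of N_R/4. -/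
/-!
Bernoulli's inequality bounds the left side by `N_R μR` and the factor `(1 - μR) ^ (l - 1)`,
`l = ⌊N_R / 4⌋`, from below by `1 - (l - 1) μR ≥ 3 / 4`, since `4 (l - 1) μR ≤ N_R μR < 1`.
The right side is therefore at least `6 l μR`, and `N_R < 6 l` as soon as `N_R ≥ 10`.
-/

lemma one_sub_mul_le_one_sub_pow {R : Type*} [Ring R] [LinearOrder R] [IsStrictOrderedRing R]
    {x : R} (hx : x ≤ 2) (n : ℕ) : 1 - n * x ≤ (1 - x) ^ n := by
  simpa only [sub_eq_add_neg, mul_neg] using one_add_mul_le_pow (neg_le_neg hx) n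

lemma lt_six_mul_div_four {n : ℕ} (hn : 10 ≤ n) : n < 6 * (n / 4) := by
  omega

theorem fronthaul_gap_small_mu_regime (N_R : ℕ) (hN : 13 ≤ N_R) (μR : ℝ)
    (hμ0 : 0 < μR) (hμ : μR < 1 / (N_R : ℝ)) :
    1 - (1 - μR) ^ N_R
      < 8 * μR * (N_R / 4 : ℕ) * (1 - μR) ^ (N_R / 4 - 1) := by
  set l := N_R / 4
  have hNμ : N_R * μR < 1 := by
    rwa [lt_div_iff₀ (by positivity), mul_comm] at hμ
  have hμ2 : μR ≤ 2 := by
    have : (1 : ℝ) ≤ N_R := by exact_mod_cast (by omega : 1 ≤ N_R)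
    nlinarith
  have hNl : (N_R : ℝ) < 6 * l := by exact_mod_cast lt_six_mul_div_four (by omega)
  have hlμ : 4 * ((l - 1 : ℕ) : ℝ) * μR ≤ 1 := by
    have : 4 * ((l - 1 : ℕ) : ℝ) ≤ N_R := by exact_mod_cast (by omega : 4 * (l - 1) ≤ N_R)
    nlinarith
  calc 1 - (1 - μR) ^ N_R
      ≤ N_R * μR := by linarith [one_sub_mul_le_one_sub_pow hμ2 N_R]
    _ < 6 * l * μR := by gcongr
    _ ≤ 8 * μR * l * (1 - (l - 1 : ℕ) * μR) := by
      nlinarith [mul_nonneg (by positivity : (0 : ℝ) ≤ μR * l) (sub_nonneg.mpr hlμ)]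
    _ ≤ 8 * μR * l * (1 - μR) ^ (l - 1) := by gcongr; exact one_sub_mul_le_one_sub_pow hμ2 _
end

section
/- Let N_T and N_R be integers with 2 ≤ N_T ≤ N_R and let μ_R be a real with 0 < μ_R ≤ 1. Then ((N_T-1)/N_T)·(1-μ_R) + ((1-μ_R)/(N_T μ_R))·(1 - (1-μ_R)^{N_R}) ≤ 12 · max_{l ∈ {1,...,N_R}} [ l·(1-μ_R)^l / min{l, N_T} ]. -/
/-!
Write `x = 1 - μ_R`. The first term is at most `x`, the `l = 1` term of the maximum. The second
term is `x (1 - x^{N_R}) / μ_R` divided by `N_T`, and by Bernoulli's inequality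
`x (1 - x^{N_R}) / μ_R ≤ min (N_R, 1/μ_R)`. If `μ_R ≤ 1/2`, then for `l = min (N_R, ⌊1/(2μ_R)⌋)`
Bernoulli also gives `x^l ≥ 1/2`, while `min (N_R, 1/μ_R) ≤ 4 l`; hence the second term is at most
`8 l x^l / N_T ≤ 8 l x^l / min (l, N_T)`. If `μ_R > 1/2`, the bound `x / μ_R < 2 x` and `l = 1`
suffice. Altogether the gap is at most `1 + 8 ≤ 12`.
-/

section AccessGap

variable {μ : ℝ}

lemma one_sub_mul_le_one_sub_pow_s9 (hμ : μ ≤ 2) (n : ℕ) : 1 - n * μ ≤ (1 - μ) ^ n := by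
  simpa [sub_eq_add_neg] using one_add_mul_le_pow (a := -μ) (by linarith) n

lemma half_le_one_sub_pow_of_mul_le_half (hμ : μ ≤ 2) {n : ℕ} (hn : n * μ ≤ 1 / 2) :
    1 / 2 ≤ (1 - μ) ^ n := by
  linarith [one_sub_mul_le_one_sub_pow_s9 hμ n]

lemma one_sub_mul_one_sub_pow_div_le_natCast (hμ0 : 0 < μ) (hμ1 : μ ≤ 1) (N : ℕ) :
    (1 - μ) * (1 - (1 - μ) ^ N) / μ ≤ N := by
  have hBernoulli := one_sub_mul_le_one_sub_pow_s9 (by linarith : μ ≤ 2) N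
  have hpow : (1 - μ) ^ N ≤ 1 := pow_le_one₀ (by linarith) (by linarith)
  rw [div_le_iff₀ hμ0]
  nlinarith

lemma one_sub_mul_one_sub_pow_div_le_inv (hμ0 : 0 < μ) (hμ1 : μ ≤ 1) (N : ℕ) :
    (1 - μ) * (1 - (1 - μ) ^ N) / μ ≤ (1 - μ) / μ := by
  have hpow : 0 ≤ (1 - μ) ^ N := pow_nonneg (by linarith) N
  gcongr
  exact mul_le_of_le_one_right (by linarith) (by linarith)

/-- The left side is the geometric sum `∑_{l=1}^{N} (1-μ)^l`. -/
lemma exists_mem_Icc_one_sub_mul_one_sub_pow_div_le (hμ0 : 0 < μ) (hμ1 : μ ≤ 1) {N : ℕ}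
    (hN : 1 ≤ N) :
    ∃ l ∈ Finset.Icc 1 N, (1 - μ) * (1 - (1 - μ) ^ N) / μ ≤ 8 * (l * (1 - μ) ^ l) := by
  have hleN := one_sub_mul_one_sub_pow_div_le_natCast hμ0 hμ1 N
  have hle_inv := one_sub_mul_one_sub_pow_div_le_inv hμ0 hμ1 N
  rcases lt_or_ge (1 / 2) μ with hbig | hsmall
  · refine ⟨1, Finset.mem_Icc.mpr ⟨le_rfl, hN⟩, hle_inv.trans ?_⟩
    rw [div_le_iff₀ hμ0]
    push_cast
    nlinarith
  set l := min N ⌊1 / (2 * μ)⌋₊ with hl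
  have h2μ : 0 < 2 * μ := by linarith
  have hfloor_pos : 1 ≤ ⌊1 / (2 * μ)⌋₊ :=
    Nat.one_le_floor_iff _ |>.mpr (by rw [le_div_iff₀ h2μ]; linarith)
  have hl_pos : 1 ≤ l := le_min hN hfloor_pos
  have hlμ : (l : ℝ) * μ ≤ 1 / 2 := by
    have : (l : ℝ) ≤ 1 / (2 * μ) :=
      (Nat.cast_le.mpr (min_le_right _ _)).trans (Nat.floor_le (by positivity))
    rw [le_div_iff₀ h2μ] at this
    linarith
  have hhalf := half_le_one_sub_pow_of_mul_le_half (by linarith : μ ≤ 2) hlμ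
  have hle_four : (1 - μ) * (1 - (1 - μ) ^ N) / μ ≤ 4 * l := by
    rcases min_choice N ⌊1 / (2 * μ)⌋₊ with hlN | hlfloor
    · rw [hl, hlN]
      have : (0 : ℝ) ≤ N := N.cast_nonneg
      linarith
    · -- `1/(2μ) < l + 1 ≤ 2l`, so `(1 - μ)/μ < 1/μ < 4l`
      have hlt := Nat.lt_floor_add_one (1 / (2 * μ))
      rw [← hlfloor, ← hl, div_lt_iff₀ h2μ] at hlt
      have hl1 : (1 : ℝ) ≤ l := by exact_mod_cast hl_pos
      refine hle_inv.trans ?_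
      rw [div_le_iff₀ hμ0]
      nlinarith
  refine ⟨l, Finset.mem_Icc.mpr ⟨hl_pos, min_le_left _ _⟩, hle_four.trans ?_⟩
  have : (0 : ℝ) ≤ l := l.cast_nonneg
  nlinarith

end AccessGap

theorem access_gap_le_twelve (N_T N_R : ℕ) (hNT : 2 ≤ N_T) (hTN : N_T ≤ N_R)
    (μR : ℝ) (hμ0 : 0 < μR) (hμ1 : μR ≤ 1) :
    (((N_T : ℝ) - 1) / N_T) * (1 - μR)
        + ((1 - μR) / (N_T * μR)) * (1 - (1 - μR) ^ N_R)
      ≤ 12 * (Finset.Icc 1 N_R).sup'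
          (Finset.nonempty_Icc.mpr (le_trans (le_trans (by norm_num) hNT) hTN))
          (fun l => (l : ℝ) * (1 - μR) ^ l / (min l N_T : ℕ)) := by
  set S := (Finset.Icc 1 N_R).sup' _ (fun l => (l : ℝ) * (1 - μR) ^ l / (min l N_T : ℕ))
  have hS : ∀ l ∈ Finset.Icc 1 N_R, (l : ℝ) * (1 - μR) ^ l / (min l N_T : ℕ) ≤ S :=
    fun l hl => Finset.le_sup' (fun l : ℕ => (l : ℝ) * (1 - μR) ^ l / (min l N_T : ℕ)) hl
  have hNT_pos : (0 : ℝ) < N_T := by exact_mod_cast (by omega : 0 < N_T)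
  have hx_le_S : 1 - μR ≤ S := by
    simpa [min_eq_left (by omega : 1 ≤ N_T)] using hS 1 (Finset.mem_Icc.mpr ⟨le_rfl, by omega⟩)
  have hfirst : ((N_T : ℝ) - 1) / N_T * (1 - μR) ≤ S := by
    refine le_trans ?_ hx_le_S
    have : ((N_T : ℝ) - 1) / N_T ≤ 1 := by rw [div_le_one hNT_pos]; linarith
    nlinarith
  obtain ⟨l, hl, hgeom⟩ := exists_mem_Icc_one_sub_mul_one_sub_pow_div_le hμ0 hμ1 (N := N_R)
    (by omega)
  have hl_pos : 0 < min l N_T := lt_min (Finset.mem_Icc.mp hl).1 (by omega)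
  have hsecond : (1 - μR) / (N_T * μR) * (1 - (1 - μR) ^ N_R) ≤ 8 * S :=
    calc (1 - μR) / (N_T * μR) * (1 - (1 - μR) ^ N_R)
        = (1 - μR) * (1 - (1 - μR) ^ N_R) / μR / N_T := by field_simp
      _ ≤ 8 * (l * (1 - μR) ^ l) / N_T := by gcongr
      _ ≤ 8 * (l * (1 - μR) ^ l) / (min l N_T : ℕ) := by
        gcongr
        exact min_le_right l N_T
      _ ≤ 8 * S := by rw [mul_div_assoc]; linarith [hS l hl]
  linarith
end

section
/- Let N_T and N_R be integers with 2 ≤ N_T ≤ N_R and let μ_R be a real with 0 < μ_R < 1/(4N_R). Then ((N_T-1)/N_T)·(1-μ_R) + ((1-μ_R)/(N_T μ_R))·(1 - (1-μ_R)^{N_R}) < (7/3) · max_{l ∈ {1,...,N_R}} [ l·(1-μ_R)^l / min{l, N_T} ]. -/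
/-!
Evaluating the maximum at `l = 1` and at `l = N_R` gives the two lower bounds `1 - μ_R` and
`N_R (1 - μ_R)^{N_R} / N_T`. The first term of the left side is below `1 - μ_R`. By Bernoulli's
inequality `1 - (1 - μ_R)^{N_R} ≤ N_R μ_R`, the second term is at most `N_R (1 - μ_R) / N_T`; and
since `N_R μ_R < 1/4`, again by Bernoulli `(1 - μ_R)^{N_R} > 3/4`, so this is less than `4/3` times
the value at `l = N_R`.
-/

section Bernoulli

variable {R : Type*} [Field R] [LinearOrder R] [IsStrictOrderedRing R]

theorem one_sub_one_sub_pow_le_mul {a : R} (ha : a ≤ 2) (n : ℕ) : 1 - (1 - a) ^ n ≤ n * a := by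
  have := one_add_mul_le_pow (a := -a) (by linarith) n
  rw [← sub_eq_add_neg] at this
  linarith [mul_neg (n : R) a]

theorem three_quarters_lt_one_sub_pow {a : R} (ha : a ≤ 2) {n : ℕ} (hn : n * a < 1 / 4) :
    3 / 4 < (1 - a) ^ n := by
  linarith [one_sub_one_sub_pow_le_mul ha n]

end Bernoulli

theorem div_mul_one_sub_one_sub_pow_le_s10 {μ T : ℝ} (hμ0 : 0 < μ) (hμ1 : μ ≤ 1) (hT : 0 ≤ T)
    (n : ℕ) : (1 - μ) / (T * μ) * (1 - (1 - μ) ^ n) ≤ (1 - μ) * n / T := calc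
  (1 - μ) / (T * μ) * (1 - (1 - μ) ^ n) ≤ (1 - μ) / (T * μ) * (n * μ) := by
    refine mul_le_mul_of_nonneg_left (one_sub_one_sub_pow_le_mul (by linarith) n) ?_
    exact div_nonneg (by linarith) (by positivity)
  _ = (1 - μ) * n / T := by field_simp

theorem access_gap_small_mu (N_T N_R : ℕ) (hNT : 2 ≤ N_T) (hTN : N_T ≤ N_R)
    (μR : ℝ) (hμ0 : 0 < μR) (hμ : μR < 1 / (4 * (N_R : ℝ))) :
    (((N_T : ℝ) - 1) / N_T) * (1 - μR)
        + ((1 - μR) / (N_T * μR)) * (1 - (1 - μR) ^ N_R)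
      < (7 / 3) * (Finset.Icc 1 N_R).sup'
          (Finset.nonempty_Icc.mpr (le_trans (le_trans (by norm_num) hNT) hTN))
          (fun l => (l : ℝ) * (1 - μR) ^ l / (min l N_T : ℕ)) := by
  set S := (Finset.Icc 1 N_R).sup' _ (fun l => (l : ℝ) * (1 - μR) ^ l / (min l N_T : ℕ))
  have hT : (2 : ℝ) ≤ N_T := by exact_mod_cast hNT
  have hR : (2 : ℝ) ≤ N_R := by exact_mod_cast hNT.trans hTN
  have hRμ : N_R * μR < 1 / 4 := by
    rw [lt_div_iff₀ (by positivity)] at hμ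
    linarith
  have hμ1 : μR < 1 := by nlinarith
  have hS_one : 1 - μR ≤ S :=
    Finset.le_sup'_of_le _ (Finset.mem_Icc.mpr ⟨le_rfl, by omega⟩)
      (by simp [min_eq_left (by omega : 1 ≤ N_T)])
  have hS_NR : N_R * (1 - μR) ^ N_R / N_T ≤ S :=
    Finset.le_sup'_of_le _ (Finset.mem_Icc.mpr ⟨by omega, le_rfl⟩) (by simp [min_eq_right hTN])
  have h_first : ((N_T : ℝ) - 1) / N_T * (1 - μR) < 1 - μR := by
    apply mul_lt_of_lt_one_left (by linarith)
    rw [div_lt_one (by positivity)]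
    linarith
  have h_second : (1 - μR) * N_R / N_T < 4 / 3 * (N_R * (1 - μR) ^ N_R / N_T) := by
    have hpow := three_quarters_lt_one_sub_pow (by linarith) hRμ
    rw [← mul_div_assoc, div_lt_div_iff_of_pos_right (by positivity)]
    nlinarith
  linarith [div_mul_one_sub_one_sub_pow_le_s10 hμ0 hμ1.le (by positivity : (0 : ℝ) ≤ N_T) N_R]
end

section
/- Let N_T and N_R be integers with 2 ≤ N_T ≤ N_R and let μ_R be a real with 1/(4N_R) ≤ μ_R < 1/(4N_T). Then ((N_T-1)/N_T)·(1-μ_R) + ((1-μ_R)/(N_T μ_R))·(1 - (1-μ_R)^{N_R}) < (37/5) · max_{l ∈ {1,...,N_R}} [ l·(1-μ_R)^l / min{l, N_T} ]. -/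
/-!
Write `M` for the maximum and `l := ⌈1 / (4 μ)⌉₊`. The term `l = 1` gives `M ≥ 1 - μ`, which
beats the first summand. Since `μ < 1 / (4 N_T)` we have `N_T ≤ l ≤ N_R`, and Bernoulli's
inequality with `l μ ≤ 1/4 + μ ≤ 3/8` gives `l (1 - μ)^l ≥ 5 / (32 μ)`, so `M ≥ 5 / (32 N_T μ)`.
The second summand is below `1 / (N_T μ) = (32/5) · 5 / (32 N_T μ)`, and `1 + 32/5 = 37/5`.
-/

lemma five_div_le_natCeil_mul_one_sub_pow {μ : ℝ} (hμ : 0 < μ) (hμ8 : μ ≤ 1 / 8) :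
    5 / (32 * μ) ≤ ⌈1 / (4 * μ)⌉₊ * (1 - μ) ^ ⌈1 / (4 * μ)⌉₊ := by
  set l := ⌈1 / (4 * μ)⌉₊
  have hl_ge : 1 / (4 * μ) ≤ l := Nat.le_ceil _
  have hlμ : l * μ ≤ 3 / 8 := by
    have hl_lt : (l : ℝ) < 1 / (4 * μ) + 1 := Nat.ceil_lt_add_one (by positivity)
    have : (1 / (4 * μ) + 1) * μ = 1 / 4 + μ := by field_simp
    nlinarith
  have hbernoulli : 1 - l * μ ≤ (1 - μ) ^ l := by
    simpa [sub_eq_add_neg] using one_add_mul_le_pow (a := -μ) (by linarith) l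
  calc 5 / (32 * μ) = 1 / (4 * μ) * (5 / 8) := by field_simp; ring
    _ ≤ l * (1 - μ) ^ l := mul_le_mul hl_ge (by linarith) (by norm_num) (by positivity)

lemma one_sub_div_mul_one_sub_pow_lt {μ c : ℝ} (hμ : 0 < μ) (hμ1 : μ < 1) (hc : 0 < c)
    (n : ℕ) : (1 - μ) / c * (1 - (1 - μ) ^ n) < 1 / c := by
  have hpow : 0 < (1 - μ) ^ n := pow_pos (by linarith) n
  calc (1 - μ) / c * (1 - (1 - μ) ^ n) < (1 - μ) / c * 1 :=
        mul_lt_mul_of_pos_left (by linarith) (div_pos (by linarith) hc)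
    _ < 1 / c := by rw [mul_one]; exact div_lt_div_of_pos_right (by linarith) hc

lemma le_natCeil_one_div_and_le {x : ℝ} {m n : ℕ} (hm : m * x < 1) (hn : 1 ≤ n * x) :
    m ≤ ⌈1 / x⌉₊ ∧ ⌈1 / x⌉₊ ≤ n := by
  have hx : 0 < x := by
    by_contra! hx
    nlinarith [(Nat.cast_nonneg n : (0 : ℝ) ≤ n)]
  refine ⟨?_, Nat.ceil_le.mpr ((div_le_iff₀ hx).mpr hn)⟩
  exact_mod_cast ((le_div_iff₀ hx).mpr hm.le).trans (Nat.le_ceil _)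

theorem access_gap_mid_mu (N_T N_R : ℕ) (hNT : 2 ≤ N_T) (hTN : N_T ≤ N_R)
    (μR : ℝ) (hμlo : 1 / (4 * (N_R : ℝ)) ≤ μR) (hμhi : μR < 1 / (4 * (N_T : ℝ))) :
    (((N_T : ℝ) - 1) / N_T) * (1 - μR)
        + ((1 - μR) / (N_T * μR)) * (1 - (1 - μR) ^ N_R)
      < (37 / 5) * (Finset.Icc 1 N_R).sup'
          (Finset.nonempty_Icc.mpr (le_trans (le_trans (by norm_num) hNT) hTN))
          (fun l => (l : ℝ) * (1 - μR) ^ l / (min l N_T : ℕ)) := by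
  have hNT2 : (2 : ℝ) ≤ N_T := by exact_mod_cast hNT
  have hNT0 : (0 : ℝ) < N_T := by linarith
  have hNR0 : (0 : ℝ) < N_R := by exact_mod_cast (by omega : 0 < N_R)
  have hμ : 0 < μR := lt_of_lt_of_le (by positivity) hμlo
  have hμhi' : N_T * (4 * μR) < 1 := by linarith [(lt_div_iff₀ (by positivity)).mp hμhi]
  have hμlo' : 1 ≤ N_R * (4 * μR) := by linarith [(div_le_iff₀ (by positivity)).mp hμlo]
  have hμ8 : μR ≤ 1 / 8 := by nlinarith
  set L := ⌈1 / (4 * μR)⌉₊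
  obtain ⟨hNTL, hLNR⟩ : N_T ≤ L ∧ L ≤ N_R := le_natCeil_one_div_and_le hμhi' hμlo'
  set f : ℕ → ℝ := fun l => l * (1 - μR) ^ l / (min l N_T : ℕ)
  set M := (Finset.Icc 1 N_R).sup' _ f
  have hM_one : 1 - μR ≤ M := by
    have : f 1 ≤ M := Finset.le_sup' f (Finset.mem_Icc.mpr ⟨le_rfl, by omega⟩)
    simpa only [f, Nat.min_eq_left (by omega : 1 ≤ N_T), Nat.cast_one, one_mul, pow_one,
      div_one] using this
  have hM_ceil : 5 / (32 * μR) / N_T ≤ M := by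
    have : f L ≤ M := Finset.le_sup' f (Finset.mem_Icc.mpr ⟨(by omega : 1 ≤ L), hLNR⟩)
    simp only [f, Nat.min_eq_right hNTL] at this
    exact le_trans (by gcongr; exact five_div_le_natCeil_mul_one_sub_pow hμ hμ8) this
  have hfirst : ((N_T : ℝ) - 1) / N_T * (1 - μR) < 1 - μR :=
    mul_lt_of_lt_one_left (by linarith) (by rw [div_lt_one hNT0]; linarith)
  have hsecond := one_sub_div_mul_one_sub_pow_lt hμ (by linarith)
    (by positivity : (0 : ℝ) < N_T * μR) N_R
  have : 1 / ((N_T : ℝ) * μR) = 32 / 5 * (5 / (32 * μR) / N_T) := by field_simp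
  linarith
end

section
/- Let N_T and N_R be integers with 2 ≤ N_T ≤ N_R and let μ_R be a real with 1/(4N_T) ≤ μ_R < 1. Then ((N_T-1)/N_T)·(1-μ_R) + ((1-μ_R)/(N_T μ_R))·(1 - (1-μ_R)^{N_R}) < (19/3) · max_{l ∈ {1,...,N_R}} [ l·(1-μ_R)^l / min{l, N_T} ]. -/
/-! The first term is at most `1 - μR` and the second at most `4 (1 - μR)`, since
`1 / (N_T μR) ≤ 4`; so the left side is at most `5 (1 - μR) < (19/3) (1 - μR)`, and `1 - μR`
is the value of the maximised expression at `l = 1`. -/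

lemma le_sup'_mul_pow_div_min {s : Finset ℕ} (hs : s.Nonempty) (h1 : 1 ∈ s) {N : ℕ}
    (hN : 1 ≤ N) (x : ℝ) :
    x ≤ s.sup' hs (fun l => (l : ℝ) * x ^ l / (min l N : ℕ)) := by
  have hmin : min 1 N = 1 := min_eq_left hN
  have := Finset.le_sup' (fun l : ℕ => (l : ℝ) * x ^ l / (min l N : ℕ)) h1
  simpa only [hmin, Nat.cast_one, one_mul, pow_one, div_one] using this

lemma sub_one_div_mul_le {N y : ℝ} (hN : 0 < N) (hy : 0 ≤ y) : ((N - 1) / N) * y ≤ y := by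
  have : (N - 1) / N ≤ 1 := by rw [div_le_one hN]; linarith
  nlinarith

lemma div_mul_one_sub_pow_le {μ a : ℝ} (hμ1 : μ ≤ 1) (ha : 1 / 4 ≤ a) (n : ℕ) :
    ((1 - μ) / a) * (1 - (1 - μ) ^ n) ≤ 4 * (1 - μ) := by
  have hpow : 0 ≤ (1 - μ) ^ n := pow_nonneg (by linarith) n
  have hdiv : (1 - μ) / a ≤ 4 * (1 - μ) := by
    rw [div_le_iff₀ (by linarith)]; nlinarith
  calc ((1 - μ) / a) * (1 - (1 - μ) ^ n)
      ≤ (1 - μ) / a := mul_le_of_le_one_right (div_nonneg (by linarith) (by linarith)) (by linarith)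
    _ ≤ 4 * (1 - μ) := hdiv

theorem access_gap_large_mu (N_T N_R : ℕ) (hNT : 2 ≤ N_T) (hTN : N_T ≤ N_R)
    (μR : ℝ) (hμlo : 1 / (4 * (N_T : ℝ)) ≤ μR) (hμhi : μR < 1) :
    (((N_T : ℝ) - 1) / N_T) * (1 - μR)
        + ((1 - μR) / (N_T * μR)) * (1 - (1 - μR) ^ N_R)
      < (19 / 3) * (Finset.Icc 1 N_R).sup'
          (Finset.nonempty_Icc.mpr (le_trans (le_trans (by norm_num) hNT) hTN))
          (fun l => (l : ℝ) * (1 - μR) ^ l / (min l N_T : ℕ)) := by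
  have hNT0 : (0 : ℝ) < N_T := by positivity
  have hNTμ : 1 / 4 ≤ (N_T : ℝ) * μR := by
    rw [div_le_iff₀ (by positivity)] at hμlo; linarith
  have h1 : 1 ∈ Finset.Icc 1 N_R := Finset.mem_Icc.mpr ⟨le_rfl, by omega⟩
  calc (((N_T : ℝ) - 1) / N_T) * (1 - μR) + ((1 - μR) / (N_T * μR)) * (1 - (1 - μR) ^ N_R)
      ≤ (1 - μR) + 4 * (1 - μR) :=
        add_le_add (sub_one_div_mul_le hNT0 (by linarith))
          (div_mul_one_sub_pow_le hμhi.le hNTμ N_R)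
    _ < (19 / 3) * (1 - μR) := by linarith
    _ ≤ _ := by
        gcongr
        exact le_sup'_mul_pow_div_min _ h1 (by omega) _
end

section
/- Let N_T and N_R be integers with N_T ≥ N_R ≥ 2, and let μ_R, μ_T, r be reals with 0 < μ_R ≤ 1, 0 ≤ μ_T ≤ 1 and r > 0. Then 2·(1-μ_R) + ((1-μ_T)^{N_T}/r)·((1-μ_R)/μ_R)·(1 - (1-μ_R)^{N_R}) ≤ 12 · [ max_{l ∈ {1,...,N_R}} ( l·(1-μ_T)^{N_T}·(1-μ_R)^{l} / r ) + (1-μ_R) ]. -/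
/-!
Write `x = 1 - μR`. Then `(1 - μR) / μR * (1 - (1 - μR) ^ N_R)` is the geometric sum
`x + ⋯ + x ^ N_R`, which Bernoulli's inequality bounds by `x * min N_R (1 / (1 - x))`.
For `l = min N_R (⌊1 / (2 (1 - x))⌋₊ + 1)` Bernoulli's inequality also gives
`x ^ (l - 1) ≥ 1 / 2`, and `min N_R (1 / (1 - x)) ≤ 2 l`; hence the geometric sum is at most
`4 l x ^ l`, and the middle term of the left-hand side is at most four times the maximum.
-/

open Finset

lemma one_sub_mul_le_pow {x : ℝ} (hx : -1 ≤ x) (n : ℕ) : 1 - n * (1 - x) ≤ x ^ n := by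
  have := one_add_mul_le_pow (a := x - 1) (by linarith) n
  rw [add_sub_cancel] at this
  linarith

lemma one_sub_pow_le_mul {x : ℝ} (hx : -1 ≤ x) (n : ℕ) : 1 - x ^ n ≤ n * (1 - x) := by
  linarith [one_sub_mul_le_pow hx n]

lemma div_one_sub_mul_one_sub_pow_le_mul_min {x : ℝ} (hx0 : 0 ≤ x) (hx1 : x < 1) (n : ℕ) :
    x / (1 - x) * (1 - x ^ n) ≤ x * min (n : ℝ) (1 / (1 - x)) := by
  have hpos : 0 < 1 - x := by linarith
  have hq : 0 ≤ x / (1 - x) := div_nonneg hx0 hpos.le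
  rcases min_choice (n : ℝ) (1 / (1 - x)) with h | h <;> rw [h]
  · calc x / (1 - x) * (1 - x ^ n) ≤ x / (1 - x) * (n * (1 - x)) := by
          gcongr; exact one_sub_pow_le_mul (by linarith) n
      _ = x * n := by field_simp
  · have : 0 ≤ x ^ n := pow_nonneg hx0 n
    rw [mul_one_div]
    nlinarith

lemma exists_mem_Icc_geom_le {x : ℝ} (hx0 : 0 ≤ x) (hx1 : x < 1) {N : ℕ} (hN : 1 ≤ N) :
    ∃ l ∈ Icc 1 N, x / (1 - x) * (1 - x ^ N) ≤ 4 * (l * x ^ l) := by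
  have hpos : 0 < 1 - x := by linarith
  set k := ⌊1 / (2 * (1 - x))⌋₊
  have hl1 : 1 ≤ min N (k + 1) := le_min hN (by omega)
  refine ⟨min N (k + 1), mem_Icc.mpr ⟨hl1, min_le_left _ _⟩, ?_⟩
  set l := min N (k + 1)
  have hhalf : 1 / 2 ≤ x ^ (l - 1) := by
    have hlk : ((l - 1 : ℕ) : ℝ) ≤ k := by exact_mod_cast (by omega : l - 1 ≤ k)
    have hk : (k : ℝ) ≤ 1 / (2 * (1 - x)) := Nat.floor_le (by positivity)
    have : ((l - 1 : ℕ) : ℝ) * (1 - x) ≤ 1 / 2 := by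
      calc ((l - 1 : ℕ) : ℝ) * (1 - x) ≤ 1 / (2 * (1 - x)) * (1 - x) := by gcongr; linarith
        _ = 1 / 2 := by field_simp
    linarith [one_sub_mul_le_pow (by linarith : -1 ≤ x) (l - 1)]
  have hmin : min (N : ℝ) (1 / (1 - x)) ≤ 2 * l := by
    have hk : 1 / (1 - x) < 2 * (k + 1) := by
      have := Nat.lt_floor_add_one (1 / (2 * (1 - x)))
      rw [div_lt_iff₀ (by positivity)] at this
      rw [div_lt_iff₀ hpos]
      linarith
    calc min (N : ℝ) (1 / (1 - x)) ≤ min (2 * (N : ℝ)) (2 * ((k : ℝ) + 1)) :=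
          min_le_min (by linarith [(Nat.cast_nonneg N : (0 : ℝ) ≤ N)]) hk.le
      _ = 2 * l := by rw [← mul_min_of_nonneg _ _ zero_le_two]; push_cast [l]; rfl
  have hpow : x ^ l = x * x ^ (l - 1) := by rw [← pow_succ', Nat.sub_add_cancel hl1]
  calc x / (1 - x) * (1 - x ^ N) ≤ x * min (N : ℝ) (1 / (1 - x)) :=
        div_one_sub_mul_one_sub_pow_le_mul_min hx0 hx1 N
    _ ≤ x * (2 * l) := by gcongr
    _ ≤ 4 * (l * (x * x ^ (l - 1))) := by
        have := mul_le_mul_of_nonneg_left hhalf (mul_nonneg hx0 (Nat.cast_nonneg l : (0 : ℝ) ≤ l))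
        linarith
    _ = 4 * (l * x ^ l) := by rw [hpow]

theorem ndt_gap_le_twelve_NT_ge_NR (N_T N_R : ℕ) (hNR : 2 ≤ N_R)
    (μR μT r : ℝ) (hμR0 : 0 < μR) (hμR1 : μR ≤ 1)
    (hμT1 : μT ≤ 1) (hr : 0 < r) :
    2 * (1 - μR)
        + ((1 - μT) ^ N_T / r) * ((1 - μR) / μR) * (1 - (1 - μR) ^ N_R)
      ≤ 12 * ((Finset.Icc 1 N_R).sup'
            (Finset.nonempty_Icc.mpr (le_trans (by norm_num) hNR))
            (fun l => (l : ℝ) * (1 - μT) ^ N_T * (1 - μR) ^ l / r)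
          + (1 - μR)) := by
  set x := 1 - μR
  have hμR : μR = 1 - x := by ring
  rw [hμR]
  have hc : 0 ≤ (1 - μT) ^ N_T / r := div_nonneg (pow_nonneg (by linarith) N_T) hr.le
  obtain ⟨l, hl, hgeom⟩ := exists_mem_Icc_geom_le (x := x) (by linarith) (by linarith)
    (le_trans (by norm_num) hNR)
  have hsup := Finset.le_sup' (fun l : ℕ => (l : ℝ) * (1 - μT) ^ N_T * x ^ l / r) hl
  have hterm : 0 ≤ (1 - μT) ^ N_T / r * (l * x ^ l) :=
    mul_nonneg hc (mul_nonneg (Nat.cast_nonneg l) (pow_nonneg (by linarith) l))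
  have hmid := mul_le_mul_of_nonneg_left hgeom hc
  have heq : (l : ℝ) * (1 - μT) ^ N_T * x ^ l / r = (1 - μT) ^ N_T / r * (l * x ^ l) := by ring
  simp only [heq] at hsup
  linarith
end
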